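/- Suppose in addition that X is a Banach space, each G_n is convex, and X is τ-uniformly convex for some τ > 1 (i.e., there is c > 0 with δ_X(ε) ≥ cε^τ for all 0 ≤ ε ≤ 2). Then for every f ∈ X and n ∈ ℕ, (Σ_{k=n+1}^∞ 2^{-kατ}‖P_{2^k}(f)‖_Y^τ)^{1/τ} ≤ C·K(f, 2^{-nα}; X, Y), with C independent of f and n. -/

import Mathlib

open scoped ENNReal

/-- The Peetre K-functional `K(f,t;X,Y) = inf{‖f−g‖_X + t‖g‖_Y : g ∈ Y}`. -/
noncomputable def KFunctional {X : Type*} [SeminormedAddCommGroup X]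
    (Y : Set X) (NY : X → ℝ) (f : X) (t : ℝ) : ℝ :=
  sInf {r : ℝ | ∃ g ∈ Y, r = ‖f - g‖ + t * NY g}

/-- The error of best approximation `E_n(f)_X = inf{‖f−g‖_X : g ∈ G_n}`. -/
noncomputable def bestApproxError {X : Type*} [SeminormedAddCommGroup X]
    (G : ℕ → Set X) (n : ℕ) (f : X) : ℝ :=
  sInf {r : ℝ | ∃ g ∈ G n, r = ‖f - g‖}

/-- The realization functional `R(f,n^{-α};X,G_n) = inf{‖f−g‖_X + n^{-α}‖g‖_Y : g ∈ G_n}`. -/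
noncomputable def realization {X : Type*} [SeminormedAddCommGroup X]
    (G : ℕ → Set X) (NY : X → ℝ) (α : ℝ) (n : ℕ) (f : X) : ℝ :=
  sInf {r : ℝ | ∃ g ∈ G n, r = ‖f - g‖ + (n : ℝ) ^ (-α) * NY g}

/-- The modulus of convexity
`δ_X(ε) = inf{1 − ‖(x+y)/2‖ : ‖x‖ = ‖y‖ = 1, ‖x−y‖ = ε}`. -/
noncomputable def modulusConvexity (X : Type*) [SeminormedAddCommGroup X] [NormedSpace ℝ X]
    (ε : ℝ) : ℝ :=
  sInf {r : ℝ | ∃ x y : X, ‖x‖ = 1 ∧ ‖y‖ = 1 ∧ ‖x - y‖ = ε ∧ r = 1 - ‖(2 : ℝ)⁻¹ • (x + y)‖}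

/-!
Let `p_m` be the best approximation of `f` from the convex set `G_{2^{n+m}}` and `E_m = ‖f - p_m‖`.
For a best approximation `p` from a convex set and any `g` in it, the midpoint of `p` and `g` is no
closer to `f` than `p`, so `τ`-uniform convexity gives
`(c/2) (‖p - g‖/2)^τ ≤ ‖f - g‖^{τ-1} (‖f - g‖ - ‖f - p‖)`.
For consecutive `p_m` the right-hand sides telescope, so `∑ ‖p_{m+1} - p_m‖^τ ≲ E_0^τ`, and
Bernstein's inequality turns this into an `ℓ^τ` bound on `b_m = 2^{-(n+m+1)α} ‖p_{m+1} - p_m‖_Y`.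
Since `a_m = 2^{-(n+m)α} ‖p_m‖_Y` satisfies `a_{m+1} ≤ b_m + 2^{-α} a_m`, Minkowski's inequality
bounds `‖(a_{m+1})‖_τ` by `‖b‖_τ + a_0`. Both `E_0` and `a_0` are `≲ ‖f - g‖ + 2^{-nα} ‖g‖_Y` for
every `g ∈ G_{2^n}`, and the infimum over `g` is the realization functional, which is
`≲ K(f, 2^{-nα})`.
-/

open Finset

-- Meant for nonnegative `x`: `Real.rpow` takes junk values at negative bases.
noncomputable def rangeLpNorm (τ : ℝ) (N : ℕ) (x : ℕ → ℝ) : ℝ :=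
  (∑ i ∈ range N, x i ^ τ) ^ (1 / τ)

section RangeLpNorm

variable {τ : ℝ} {N : ℕ} {x y : ℕ → ℝ}

lemma rangeLpNorm_nonneg (hx : ∀ i, 0 ≤ x i) : 0 ≤ rangeLpNorm τ N x :=
  Real.rpow_nonneg (sum_nonneg fun i _ => Real.rpow_nonneg (hx i) τ) _

lemma rangeLpNorm_zero (hτ : 0 < τ) (x : ℕ → ℝ) : rangeLpNorm τ 0 x = 0 := by
  rw [rangeLpNorm, sum_range_zero, Real.zero_rpow (by positivity)]

lemma rangeLpNorm_le_iff (hτ : 0 < τ) (hx : ∀ i, 0 ≤ x i) {A : ℝ} (hA : 0 ≤ A) :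
    rangeLpNorm τ N x ≤ A ↔ ∑ i ∈ range N, x i ^ τ ≤ A ^ τ := by
  rw [rangeLpNorm, one_div,
    Real.rpow_inv_le_iff_of_pos (sum_nonneg fun i _ => Real.rpow_nonneg (hx i) τ) hA hτ]

lemma rangeLpNorm_mono (hτ : 0 < τ) (hx : ∀ i, 0 ≤ x i) (hxy : ∀ i, x i ≤ y i) :
    rangeLpNorm τ N x ≤ rangeLpNorm τ N y :=
  Real.rpow_le_rpow (sum_nonneg fun i _ => Real.rpow_nonneg (hx i) τ)
    (sum_le_sum fun i _ => Real.rpow_le_rpow (hx i) (hxy i) hτ.le) (by positivity)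

lemma rangeLpNorm_add_le (hτ : 1 ≤ τ) (hx : ∀ i, 0 ≤ x i) (hy : ∀ i, 0 ≤ y i) :
    rangeLpNorm τ N (x + y) ≤ rangeLpNorm τ N x + rangeLpNorm τ N y :=
  Real.Lp_add_le_of_nonneg _ hτ (fun i _ => hx i) (fun i _ => hy i)

lemma rangeLpNorm_const_mul (hτ : 0 < τ) {a : ℝ} (ha : 0 ≤ a) (hx : ∀ i, 0 ≤ x i) :
    rangeLpNorm τ N (fun i => a * x i) = a * rangeLpNorm τ N x := by
  simp only [rangeLpNorm, Real.mul_rpow ha (hx _), ← mul_sum]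
  rw [Real.mul_rpow (Real.rpow_nonneg ha τ) (sum_nonneg fun i _ => Real.rpow_nonneg (hx i) τ),
    ← Real.rpow_mul ha, mul_one_div_cancel hτ.ne', Real.rpow_one]

lemma rangeLpNorm_le_add_rangeLpNorm_succ (hτ : 1 ≤ τ) (hx : ∀ i, 0 ≤ x i) :
    rangeLpNorm τ N x ≤ x 0 + rangeLpNorm τ N (fun i => x (i + 1)) := by
  have hτ0 : 0 < τ := by linarith
  have hsucc := rangeLpNorm_nonneg (τ := τ) (N := N) fun i => hx (i + 1)
  calc rangeLpNorm τ N x ≤ rangeLpNorm τ (N + 1) x :=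
        Real.rpow_le_rpow (sum_nonneg fun i _ => Real.rpow_nonneg (hx i) τ)
          (sum_le_sum_of_subset_of_nonneg (range_subset_range.2 N.le_succ)
            fun i _ _ => Real.rpow_nonneg (hx i) τ) (by positivity)
    _ = (x 0 ^ τ + rangeLpNorm τ N (fun i => x (i + 1)) ^ τ) ^ (1 / τ) := by
        rw [rangeLpNorm, sum_range_succ', add_comm, rangeLpNorm, one_div,
          Real.rpow_inv_rpow (sum_nonneg fun i _ => Real.rpow_nonneg (hx _) τ) hτ0.ne']
    _ ≤ x 0 + rangeLpNorm τ N (fun i => x (i + 1)) := Real.rpow_add_rpow_le_add (hx 0) hsucc hτ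

lemma rangeLpNorm_succ_le_of_le_add_mul (hτ : 1 ≤ τ) {q : ℝ} (hq0 : 0 ≤ q) (hq1 : q < 1)
    {a b : ℕ → ℝ} (ha : ∀ i, 0 ≤ a i) (hb : ∀ i, 0 ≤ b i)
    (hrec : ∀ i, a (i + 1) ≤ b i + q * a i) :
    rangeLpNorm τ N (fun i => a (i + 1)) ≤ (rangeLpNorm τ N b + a 0) / (1 - q) := by
  have hτ0 : 0 < τ := by linarith
  have key : rangeLpNorm τ N (fun i => a (i + 1)) ≤
      rangeLpNorm τ N b + q * (a 0 + rangeLpNorm τ N (fun i => a (i + 1))) :=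
    calc rangeLpNorm τ N (fun i => a (i + 1))
        ≤ rangeLpNorm τ N (b + fun i => q * a i) := rangeLpNorm_mono hτ0 (fun i => ha _) hrec
      _ ≤ rangeLpNorm τ N b + rangeLpNorm τ N (fun i => q * a i) :=
        rangeLpNorm_add_le hτ hb fun i => mul_nonneg hq0 (ha i)
      _ = rangeLpNorm τ N b + q * rangeLpNorm τ N a := by rw [rangeLpNorm_const_mul hτ0 hq0 ha]
      _ ≤ _ := by gcongr; exact rangeLpNorm_le_add_rangeLpNorm_succ hτ ha
  rw [le_div_iff₀ (by linarith)]
  linarith [mul_nonneg (sub_nonneg.2 hq1.le) (ha 0)]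

lemma sum_rpow_sub_one_mul_sub_le (hτ : 1 ≤ τ) {E : ℕ → ℝ} (hE : Antitone E)
    (hE0 : ∀ i, 0 ≤ E i) (N : ℕ) :
    ∑ i ∈ range N, E i ^ (τ - 1) * (E i - E (i + 1)) ≤ E 0 ^ τ :=
  calc ∑ i ∈ range N, E i ^ (τ - 1) * (E i - E (i + 1))
      ≤ ∑ i ∈ range N, E 0 ^ (τ - 1) * (E i - E (i + 1)) :=
        sum_le_sum fun i _ => mul_le_mul_of_nonneg_right
          (Real.rpow_le_rpow (hE0 i) (hE i.zero_le) (by linarith))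
          (sub_nonneg.2 (hE i.le_succ))
    _ = E 0 ^ (τ - 1) * (E 0 - E N) := by rw [← mul_sum, sum_range_sub']
    _ ≤ E 0 ^ (τ - 1) * E 0 :=
        mul_le_mul_of_nonneg_left (by linarith [hE0 N]) (Real.rpow_nonneg (hE0 0) _)
    _ = E 0 ^ τ := by rw [← Real.rpow_add_one' (hE0 0) (by linarith), sub_add_cancel]

lemma rangeLpNorm_le_of_mul_rpow_le (hτ : 1 ≤ τ) {κ : ℝ} (hκ : 0 < κ) {d E : ℕ → ℝ}
    (hd : ∀ i, 0 ≤ d i) (hE : Antitone E) (hE0 : ∀ i, 0 ≤ E i)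
    (hstep : ∀ i, κ * d i ^ τ ≤ E i ^ (τ - 1) * (E i - E (i + 1))) :
    rangeLpNorm τ N d ≤ κ⁻¹ ^ (1 / τ) * E 0 := by
  have hτ0 : 0 < τ := by linarith
  rw [rangeLpNorm_le_iff hτ0 hd (mul_nonneg (by positivity) (hE0 0))]
  calc ∑ i ∈ range N, d i ^ τ
      ≤ ∑ i ∈ range N, κ⁻¹ * (E i ^ (τ - 1) * (E i - E (i + 1))) :=
        sum_le_sum fun i _ => (le_inv_mul_iff₀ hκ).2 (hstep i)
    _ ≤ κ⁻¹ * E 0 ^ τ := by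
        rw [← mul_sum]; gcongr; exact sum_rpow_sub_one_mul_sub_le hτ hE hE0 N
    _ = (κ⁻¹ ^ (1 / τ) * E 0) ^ τ := by
        rw [Real.mul_rpow (by positivity) (hE0 0), ← Real.rpow_mul (by positivity),
          one_div_mul_cancel hτ0.ne', Real.rpow_one]

lemma tsum_ofReal_rpow_rpow_le (hτ : 0 < τ) (hx : ∀ i, 0 ≤ x i) {A : ℝ}
    (h : ∀ N, rangeLpNorm τ N x ≤ A) :
    (∑' i, ENNReal.ofReal (x i ^ τ)) ^ (1 / τ) ≤ ENNReal.ofReal A := by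
  have hA : 0 ≤ A := (rangeLpNorm_zero hτ x).symm.le.trans (h 0)
  have hsum : ∑' i, ENNReal.ofReal (x i ^ τ) ≤ ENNReal.ofReal (A ^ τ) :=
    ENNReal.tsum_le_of_sum_range_le fun N => by
      rw [← ENNReal.ofReal_sum_of_nonneg fun i _ => Real.rpow_nonneg (hx i) τ]
      exact ENNReal.ofReal_le_ofReal ((rangeLpNorm_le_iff hτ hx hA).1 (h N))
  calc (∑' i, ENNReal.ofReal (x i ^ τ)) ^ (1 / τ) ≤ ENNReal.ofReal (A ^ τ) ^ (1 / τ) :=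
        ENNReal.rpow_le_rpow hsum (by positivity)
    _ = ENNReal.ofReal A := by
        rw [ENNReal.ofReal_rpow_of_nonneg (by positivity) (by positivity), ← Real.rpow_mul hA,
          mul_one_div_cancel hτ.ne', Real.rpow_one]

end RangeLpNorm

section UniformConvexity

variable {X : Type*} [NormedAddCommGroup X] [NormedSpace ℝ X]

lemma norm_midpoint_le (x y : X) : ‖(2 : ℝ)⁻¹ • (x + y)‖ ≤ (‖x‖ + ‖y‖) / 2 := by
  rw [norm_smul, norm_inv, Real.norm_ofNat]
  linarith [norm_add_le x y]

lemma modulusConvexity_le {x y : X} (hx : ‖x‖ = 1) (hy : ‖y‖ = 1) :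
    modulusConvexity X ‖x - y‖ ≤ 1 - ‖(2 : ℝ)⁻¹ • (x + y)‖ := by
  refine csInf_le ⟨0, ?_⟩ ⟨x, y, hx, hy, rfl, rfl⟩
  rintro r ⟨x', y', hx', hy', -, rfl⟩
  linarith [norm_midpoint_le x' y']

lemma norm_sub_inv_norm_smul_self {x : X} (hx : x ≠ 0) (hx1 : ‖x‖ ≤ 1) :
    ‖x - ‖x‖⁻¹ • x‖ = 1 - ‖x‖ := by
  have hpos : 0 < ‖x‖ := norm_pos_iff.2 hx
  have h1 : 1 ≤ ‖x‖⁻¹ := (one_le_inv₀ hpos).2 hx1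
  rw [show x - ‖x‖⁻¹ • x = (1 - ‖x‖⁻¹) • x by rw [sub_smul, one_smul], norm_smul,
    Real.norm_of_nonpos (by linarith), neg_sub, sub_mul, inv_mul_cancel₀ hpos.ne', one_mul]

lemma norm_inv_norm_smul_self {x : X} (hx : x ≠ 0) : ‖‖x‖⁻¹ • x‖ = 1 := by
  rw [norm_smul, norm_inv, norm_norm, inv_mul_cancel₀ (norm_ne_zero_iff.2 hx)]

variable {τ c : ℝ}

-- Pass to the normalizations of `u` and `v`, which moves them by `1 - ‖u‖` and `1 - ‖v‖`.
lemma mul_rpow_sub_le_one_sub_norm_midpoint_add (hτ : 0 < τ) (hc : 0 ≤ c)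
    (hconv : ∀ ε : ℝ, 0 ≤ ε → ε ≤ 2 → c * ε ^ τ ≤ modulusConvexity X ε)
    {u v : X} (hu : u ≠ 0) (hv : v ≠ 0) (hu1 : ‖u‖ ≤ 1) (hv1 : ‖v‖ ≤ 1)
    (hgap : 2 - ‖u‖ - ‖v‖ ≤ ‖u - v‖) :
    c * (‖u - v‖ - (2 - ‖u‖ - ‖v‖)) ^ τ ≤
      1 - ‖(2 : ℝ)⁻¹ • (u + v)‖ + (2 - ‖u‖ - ‖v‖) / 2 := by
  set u' := ‖u‖⁻¹ • u
  set v' := ‖v‖⁻¹ • v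
  have hu' : ‖u'‖ = 1 := norm_inv_norm_smul_self hu
  have hv' : ‖v'‖ = 1 := norm_inv_norm_smul_self hv
  have huu' : ‖u - u'‖ = 1 - ‖u‖ := norm_sub_inv_norm_smul_self hu hu1
  have hvv' : ‖v - v'‖ = 1 - ‖v‖ := norm_sub_inv_norm_smul_self hv hv1
  have hdist : ‖u - v‖ - (2 - ‖u‖ - ‖v‖) ≤ ‖u' - v'‖ := by
    have := norm_sub_le_norm_sub_add_norm_sub u u' v
    have := norm_sub_le_norm_sub_add_norm_sub u' v' v
    rw [norm_sub_rev v'] at this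
    linarith
  have hmid : ‖(2 : ℝ)⁻¹ • (u + v)‖ ≤ ‖(2 : ℝ)⁻¹ • (u' + v')‖ + (2 - ‖u‖ - ‖v‖) / 2 := by
    rw [show (2 : ℝ)⁻¹ • (u + v) = (2 : ℝ)⁻¹ • (u' + v') + (2 : ℝ)⁻¹ • ((u - u') + (v - v')) by
      rw [← smul_add]; congr 1; abel]
    linarith [norm_add_le ((2 : ℝ)⁻¹ • (u' + v')) ((2 : ℝ)⁻¹ • ((u - u') + (v - v'))),
      norm_midpoint_le (u - u') (v - v')]
  calc c * (‖u - v‖ - (2 - ‖u‖ - ‖v‖)) ^ τ ≤ c * ‖u' - v'‖ ^ τ := by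
        gcongr
    _ ≤ modulusConvexity X ‖u' - v'‖ :=
        hconv _ (norm_nonneg _) (by linarith [norm_sub_le u' v'])
    _ ≤ 1 - ‖(2 : ℝ)⁻¹ • (u' + v')‖ := modulusConvexity_le hu' hv'
    _ ≤ _ := by linarith

lemma mul_half_rpow_le_one_sub_norm_midpoint (hτ : 1 ≤ τ) (hc : 0 < c) (hc1 : c ≤ 1)
    (hconv : ∀ ε : ℝ, 0 ≤ ε → ε ≤ 2 → c * ε ^ τ ≤ modulusConvexity X ε)
    {u v : X} (hu1 : ‖u‖ ≤ 1) (hv1 : ‖v‖ ≤ 1) :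
    c / 2 * (‖u - v‖ / 2) ^ τ ≤ 1 - ‖(2 : ℝ)⁻¹ • (u + v)‖ := by
  -- Either the defect `2 - ‖u‖ - ‖v‖` already wins, or it is small against `‖u - v‖` and the
  -- normalized pair is still far apart.
  have hdefect : (2 - ‖u‖ - ‖v‖) / 2 ≤ 1 - ‖(2 : ℝ)⁻¹ • (u + v)‖ := by
    linarith [norm_midpoint_le u v]
  rcases le_or_gt (c / 2 * (‖u - v‖ / 2) ^ τ) ((2 - ‖u‖ - ‖v‖) / 2) with hsmall | hsmall
  · exact hsmall.trans hdefect
  have huv := norm_sub_le u v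
  have hrpow : (‖u - v‖ / 2) ^ τ ≤ ‖u - v‖ / 2 := by
    simpa using Real.rpow_le_rpow_of_exponent_ge' (by positivity) (by linarith) zero_le_one hτ
  have hc_rpow := mul_le_mul_of_nonneg_right hc1 (by positivity : 0 ≤ (‖u - v‖ / 2) ^ τ)
  have hgap : 2 - ‖u‖ - ‖v‖ ≤ ‖u - v‖ / 2 := by linarith
  have hu : u ≠ 0 := norm_pos_iff.1 (by linarith)
  have hv : v ≠ 0 := norm_pos_iff.1 (by linarith)
  have key := mul_rpow_sub_le_one_sub_norm_midpoint_add (by linarith) hc.le hconv hu hv hu1 hv1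
    (by linarith [norm_nonneg (u - v)])
  have : c * (‖u - v‖ / 2) ^ τ ≤ c * (‖u - v‖ - (2 - ‖u‖ - ‖v‖)) ^ τ := by
    gcongr; linarith
  linarith

lemma mul_half_rpow_le_rpow_sub_one_mul (hτ : 1 ≤ τ) (hc : 0 < c) (hc1 : c ≤ 1)
    (hconv : ∀ ε : ℝ, 0 ≤ ε → ε ≤ 2 → c * ε ^ τ ≤ modulusConvexity X ε)
    {R : ℝ} (hR : 0 < R) {u v : X} (hu : ‖u‖ ≤ R) (hv : ‖v‖ ≤ R) :
    c / 2 * (‖u - v‖ / 2) ^ τ ≤ R ^ (τ - 1) * (R - ‖(2 : ℝ)⁻¹ • (u + v)‖) := by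
  have hscale : ∀ x : X, ‖R⁻¹ • x‖ = ‖x‖ / R := fun x => by
    rw [norm_smul, norm_inv, Real.norm_of_nonneg hR.le, inv_mul_eq_div]
  have key := mul_half_rpow_le_one_sub_norm_midpoint hτ hc hc1 hconv (u := R⁻¹ • u)
    (v := R⁻¹ • v) (by rwa [hscale, div_le_one hR]) (by rwa [hscale, div_le_one hR])
  rw [← smul_sub, ← smul_add, smul_comm, hscale, hscale, div_right_comm,
    Real.div_rpow (by positivity) hR.le] at key
  have hRτ : R ^ τ = R ^ (τ - 1) * R := by
    rw [← Real.rpow_add_one' hR.le (by linarith), sub_add_cancel]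
  calc c / 2 * (‖u - v‖ / 2) ^ τ = R ^ τ * (c / 2 * ((‖u - v‖ / 2) ^ τ / R ^ τ)) := by
        field_simp
    _ ≤ R ^ τ * (1 - ‖(2 : ℝ)⁻¹ • (u + v)‖ / R) := by gcongr
    _ = R ^ (τ - 1) * (R - ‖(2 : ℝ)⁻¹ • (u + v)‖) := by
        rw [hRτ]; field_simp

lemma Convex.mul_half_rpow_le_of_best_approx (hτ : 1 ≤ τ) (hc : 0 < c) (hc1 : c ≤ 1)
    (hconv : ∀ ε : ℝ, 0 ≤ ε → ε ≤ 2 → c * ε ^ τ ≤ modulusConvexity X ε)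
    {S : Set X} (hS : Convex ℝ S) {f p g : X} (hp : p ∈ S) (hg : g ∈ S)
    (hbest : ∀ h ∈ S, ‖f - p‖ ≤ ‖f - h‖) :
    c / 2 * (‖p - g‖ / 2) ^ τ ≤ ‖f - g‖ ^ (τ - 1) * (‖f - g‖ - ‖f - p‖) := by
  have hfp := hbest g hg
  rcases (norm_nonneg (f - g)).eq_or_lt with hR | hR
  · have hfp0 : ‖f - p‖ = 0 := by linarith [norm_nonneg (f - p)]
    have hpg : ‖p - g‖ = 0 := by
      have := norm_sub_le_norm_sub_add_norm_sub p f g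
      rw [norm_sub_rev p f] at this
      linarith [norm_nonneg (p - g)]
    rw [hpg, hfp0, ← hR, zero_div, Real.zero_rpow (by linarith)]
    simp
  have hmid : (2 : ℝ)⁻¹ • (p + g) ∈ S := by
    simpa only [smul_add] using hS hp hg (by norm_num) (by norm_num) (by norm_num)
  have key := mul_half_rpow_le_rpow_sub_one_mul hτ hc hc1 hconv hR (u := f - p) (v := f - g)
    hfp le_rfl
  rw [sub_sub_sub_cancel_left, norm_sub_rev,
    show (2 : ℝ)⁻¹ • (f - p + (f - g)) = f - (2 : ℝ)⁻¹ • (p + g) by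
      module] at key
  exact key.trans (by gcongr; exact hbest _ hmid)

end UniformConvexity

section DyadicBestApproximation

variable {X : Type*} [NormedAddCommGroup X] [NormedSpace ℝ X] {NY : X → ℝ} {S : ℕ → Set X}
  {w : ℕ → ℝ} {c₂ τ c : ℝ} {f : X} {p : ℕ → X}

lemma rangeLpNorm_weighted_increment_le (hNY_nonneg : ∀ g, 0 ≤ NY g)
    (hS_mono : ∀ m, S m ⊆ S (m + 1)) (hS_conv : ∀ m, Convex ℝ (S m)) (hw : ∀ m, 0 ≤ w m)
    (hc₂ : 0 ≤ c₂) (hbern : ∀ m, ∀ g₁ ∈ S m, ∀ g₂ ∈ S m, w m * NY (g₁ - g₂) ≤ c₂ * ‖g₁ - g₂‖)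
    (hτ : 1 ≤ τ) (hc : 0 < c) (hc1 : c ≤ 1)
    (hconv : ∀ ε : ℝ, 0 ≤ ε → ε ≤ 2 → c * ε ^ τ ≤ modulusConvexity X ε)
    (hp : ∀ m, p m ∈ S m) (hp_best : ∀ m, ∀ g ∈ S m, ‖f - p m‖ ≤ ‖f - g‖) (N : ℕ) :
    rangeLpNorm τ N (fun i => w (i + 1) * NY (p (i + 1) - p i)) ≤
      2 * c₂ * ((c / 2)⁻¹ ^ (1 / τ) * ‖f - p 0‖) := by
  have hτ0 : 0 < τ := by linarith
  have hp_succ : ∀ m, p m ∈ S (m + 1) := fun m => hS_mono m (hp m)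
  calc rangeLpNorm τ N (fun i => w (i + 1) * NY (p (i + 1) - p i))
      ≤ rangeLpNorm τ N (fun i => 2 * c₂ * (‖p (i + 1) - p i‖ / 2)) :=
        rangeLpNorm_mono hτ0 (fun i => mul_nonneg (hw _) (hNY_nonneg _)) fun i => by
          linarith [hbern (i + 1) _ (hp (i + 1)) _ (hp_succ i)]
    _ ≤ 2 * c₂ * ((c / 2)⁻¹ ^ (1 / τ) * ‖f - p 0‖) := by
        rw [rangeLpNorm_const_mul hτ0 (by positivity) fun i => by positivity]
        gcongr
        exact rangeLpNorm_le_of_mul_rpow_le (E := fun m => ‖f - p m‖) hτ (by positivity)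
          (fun i => by positivity)
          (antitone_nat_of_succ_le fun m => hp_best (m + 1) _ (hp_succ m))
          (fun i => norm_nonneg _)
          fun i => (hS_conv (i + 1)).mul_half_rpow_le_of_best_approx hτ hc hc1 hconv (hp (i + 1))
            (hp_succ i) (hp_best (i + 1))

lemma rangeLpNorm_weighted_bestApprox_le {Y : Submodule ℝ X} (hNY_nonneg : ∀ g, 0 ≤ NY g)
    (hNY_add : ∀ g h : X, g ∈ Y → h ∈ Y → NY (g + h) ≤ NY g + NY h)
    (hS_mono : ∀ m, S m ⊆ S (m + 1)) (hS_sub : ∀ m, S m ⊆ Y) (hS_conv : ∀ m, Convex ℝ (S m))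
    {q : ℝ} (hw : ∀ m, 0 ≤ w m) (hw_succ : ∀ m, w (m + 1) = q * w m) (hq0 : 0 ≤ q)
    (hq1 : q < 1) (hc₂ : 0 ≤ c₂)
    (hbern : ∀ m, ∀ g₁ ∈ S m, ∀ g₂ ∈ S m, w m * NY (g₁ - g₂) ≤ c₂ * ‖g₁ - g₂‖)
    (hτ : 1 ≤ τ) (hc : 0 < c) (hc1 : c ≤ 1)
    (hconv : ∀ ε : ℝ, 0 ≤ ε → ε ≤ 2 → c * ε ^ τ ≤ modulusConvexity X ε)
    (hp : ∀ m, p m ∈ S m) (hp_best : ∀ m, ∀ g ∈ S m, ‖f - p m‖ ≤ ‖f - g‖)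
    {g : X} (hg : g ∈ S 0) (N : ℕ) :
    rangeLpNorm τ N (fun i => w (i + 1) * NY (p (i + 1))) ≤
      (2 * c₂ * ((c / 2)⁻¹ ^ (1 / τ) + 1) + 1) / (1 - q) * (‖f - g‖ + w 0 * NY g) := by
  have hNY_sub : ∀ x ∈ Y, ∀ y ∈ Y, NY x ≤ NY (x - y) + NY y := fun x hx y hy => by
    simpa using hNY_add (x - y) y (Y.sub_mem hx hy) hy
  have hK : 0 ≤ (c / 2)⁻¹ ^ (1 / τ) := by positivity
  have hfp := hp_best 0 g hg
  have hjump := rangeLpNorm_weighted_increment_le hNY_nonneg hS_mono hS_conv hw hc₂ hbern hτ hc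
    hc1 hconv hp hp_best N
  have hrec : ∀ i, w (i + 1) * NY (p (i + 1)) ≤
      w (i + 1) * NY (p (i + 1) - p i) + q * (w i * NY (p i)) := fun i => by
    rw [← mul_assoc, ← hw_succ, ← mul_add]
    exact mul_le_mul_of_nonneg_left
      (hNY_sub _ (hS_sub _ (hp (i + 1))) _ (hS_sub _ (hS_mono i (hp i)))) (hw _)
  have hstart : w 0 * NY (p 0) ≤ 2 * c₂ * ‖f - g‖ + w 0 * NY g := by
    have hdist : ‖p 0 - g‖ ≤ 2 * ‖f - g‖ := by
      have := norm_sub_le_norm_sub_add_norm_sub (p 0) f g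
      rw [norm_sub_rev (p 0) f] at this
      linarith
    calc w 0 * NY (p 0) ≤ w 0 * NY (p 0 - g) + w 0 * NY g := by
          rw [← mul_add]
          exact mul_le_mul_of_nonneg_left (hNY_sub _ (hS_sub 0 (hp 0)) _ (hS_sub 0 hg)) (hw 0)
      _ ≤ c₂ * (2 * ‖f - g‖) + w 0 * NY g :=
          add_le_add_left ((hbern 0 _ (hp 0) _ hg).trans (mul_le_mul_of_nonneg_left hdist hc₂)) _
      _ = 2 * c₂ * ‖f - g‖ + w 0 * NY g := by ring
  calc rangeLpNorm τ N (fun i => w (i + 1) * NY (p (i + 1)))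
      ≤ (rangeLpNorm τ N (fun i => w (i + 1) * NY (p (i + 1) - p i)) + w 0 * NY (p 0)) /
          (1 - q) :=
        rangeLpNorm_succ_le_of_le_add_mul (a := fun i => w i * NY (p i))
          (b := fun i => w (i + 1) * NY (p (i + 1) - p i)) hτ hq0 hq1
          (fun i => mul_nonneg (hw _) (hNY_nonneg _))
          (fun i => mul_nonneg (hw _) (hNY_nonneg _)) hrec
    _ ≤ _ := by
        rw [div_mul_eq_mul_div]
        refine div_le_div_of_nonneg_right ?_ (by linarith)
        linarith [mul_nonneg (mul_nonneg hc₂ (add_nonneg hK zero_le_one)) (mul_nonneg (hw 0)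
          (hNY_nonneg g)), norm_nonneg (f - g), mul_le_mul_of_nonneg_left hfp
          (mul_nonneg hc₂ hK)]

end DyadicBestApproximation

section Functionals

variable {X : Type*} [SeminormedAddCommGroup X] {G : ℕ → Set X}

lemma bestApproxError_le {n : ℕ} (f : X) {g : X} (hg : g ∈ G n) :
    bestApproxError G n f ≤ ‖f - g‖ :=
  csInf_le ⟨0, by rintro r ⟨h, -, rfl⟩; exact norm_nonneg _⟩ ⟨g, hg, rfl⟩

lemma le_realization {NY : X → ℝ} {α : ℝ} {n : ℕ} {f : X} (hne : (G n).Nonempty) {L : ℝ}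
    (h : ∀ g ∈ G n, L ≤ ‖f - g‖ + (n : ℝ) ^ (-α) * NY g) : L ≤ realization G NY α n f :=
  le_csInf (hne.elim fun g hg => ⟨_, g, hg, rfl⟩) (by rintro r ⟨g, hg, rfl⟩; exact h g hg)

end Functionals

lemma natCast_two_pow_rpow_neg (α : ℝ) (m : ℕ) :
    ((2 ^ m : ℕ) : ℝ) ^ (-α) = ((2 : ℝ) ^ (-α)) ^ m := by
  rw [Nat.cast_pow, Nat.cast_ofNat, Real.rpow_pow_comm zero_le_two]

lemma two_rpow_neg_natCast_mul (α : ℝ) (m : ℕ) :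
    (2 : ℝ) ^ (-(m : ℝ) * α) = ((2 : ℝ) ^ (-α)) ^ m := by
  rw [neg_mul, ← mul_neg, mul_comm, Real.rpow_mul_natCast zero_le_two]

lemma rpow_neg_mul_le_of_le_mul_rpow {t α y c z : ℝ} (ht : 0 < t) (h : y ≤ c * t ^ α * z) :
    t ^ (-α) * y ≤ c * z :=
  calc t ^ (-α) * y ≤ t ^ (-α) * (c * t ^ α * z) := by gcongr
    _ = c * z := by
        rw [Real.rpow_neg ht.le]
        field_simp

theorem stmt6_general {X : Type*} [NormedAddCommGroup X] [NormedSpace ℝ X]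
    (Y : Submodule ℝ X) (NY : X → ℝ)
    (hNY_nonneg : ∀ g : X, 0 ≤ NY g)
    (hNY_add : ∀ g h : X, g ∈ Y → h ∈ Y → NY (g + h) ≤ NY g + NY h)
    (G : ℕ → Set X)
    (hG_zero : (0 : X) ∈ G 1)
    (hG_mono : ∀ n : ℕ, G n ⊆ G (n + 1))
    (hG_sub : ∀ n : ℕ, G n ⊆ (Y : Set X))
    (α : ℝ) (hα : 0 < α)
    (c₂ : ℝ) (hc₂ : 0 < c₂)
    (bernstein : ∀ n : ℕ, 1 ≤ n → ∀ g₁ ∈ G n, ∀ g₂ ∈ G n,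
      NY (g₁ - g₂) ≤ c₂ * (n : ℝ) ^ α * ‖g₁ - g₂‖)
    (C₀ : ℝ) (hC₀ : 0 < C₀)
    (hreal : ∀ (f : X) (n : ℕ), 1 ≤ n →
      realization G NY α n f ≤ C₀ * KFunctional (Y : Set X) NY f ((n : ℝ) ^ (-α)))
    (P : ℕ → X → X)
    (hP : ∀ (f : X) (n : ℕ), 1 ≤ n → P n f ∈ G n ∧ ‖f - P n f‖ = bestApproxError G n f)
    (hG_conv : ∀ n : ℕ, Convex ℝ (G n))
    (τ : ℝ) (hτ : 1 < τ)
    (cX : ℝ) (hcX : 0 < cX)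
    (hconv : ∀ ε : ℝ, 0 ≤ ε → ε ≤ 2 → cX * ε ^ τ ≤ modulusConvexity X ε) :
    ∃ C : ℝ, 0 < C ∧ ∀ (f : X) (n : ℕ), 1 ≤ n →
      (∑' k : ℕ,
          ENNReal.ofReal
            (((2 : ℝ) ^ (-((n + 1 + k : ℕ) : ℝ) * α) * NY (P (2 ^ (n + 1 + k)) f)) ^ τ)) ^
          (1 / τ)
        ≤ ENNReal.ofReal
            (C * KFunctional (Y : Set X) NY f ((2 : ℝ) ^ (-(n : ℝ) * α))) := by
  -- The uniform-convexity lemmas want `c ≤ 1`; shrinking the constant keeps `hconv` true.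
  set c := min cX 1
  have hconv' : ∀ ε : ℝ, 0 ≤ ε → ε ≤ 2 → c * ε ^ τ ≤ modulusConvexity X ε := fun ε h0 h2 =>
    (mul_le_mul_of_nonneg_right (min_le_left _ _) (Real.rpow_nonneg h0 τ)).trans (hconv ε h0 h2)
  set q : ℝ := (2 : ℝ) ^ (-α)
  have hq1 : q < 1 := Real.rpow_lt_one_of_one_lt_of_neg one_lt_two (by linarith)
  have hGm : Monotone G := monotone_nat_of_le_succ hG_mono
  set A := (2 * c₂ * ((c / 2)⁻¹ ^ (1 / τ) + 1) + 1) / (1 - q)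
  have hA : 0 < A := div_pos (by positivity) (sub_pos.2 hq1)
  have hbern : ∀ m, ∀ g₁ ∈ G (2 ^ m), ∀ g₂ ∈ G (2 ^ m), q ^ m * NY (g₁ - g₂) ≤ c₂ * ‖g₁ - g₂‖ :=
    fun m g₁ h₁ g₂ h₂ => natCast_two_pow_rpow_neg α m ▸
      rpow_neg_mul_le_of_le_mul_rpow (by positivity) (bernstein _ Nat.one_le_two_pow _ h₁ _ h₂)
  refine ⟨A * C₀, by positivity, fun f n _ => ?_⟩
  have hbest : ∀ m, ∀ g ∈ G (2 ^ m), ‖f - P (2 ^ m) f‖ ≤ ‖f - g‖ := fun m g hg =>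
    (hP f _ Nat.one_le_two_pow).2 ▸ bestApproxError_le f hg
  have hterm : ∀ k : ℕ, (2 : ℝ) ^ (-((n + 1 + k : ℕ) : ℝ) * α) * NY (P (2 ^ (n + 1 + k)) f) =
      q ^ (n + (k + 1)) * NY (P (2 ^ (n + (k + 1))) f) := fun k => by
    rw [two_rpow_neg_natCast_mul, show n + 1 + k = n + (k + 1) by ring]
  simp only [hterm]
  refine tsum_ofReal_rpow_rpow_le (by linarith)
    (fun k => mul_nonneg (by positivity) (hNY_nonneg _)) fun N => ?_
  calc rangeLpNorm τ N (fun k => q ^ (n + (k + 1)) * NY (P (2 ^ (n + (k + 1))) f))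
      ≤ A * realization G NY α (2 ^ n) f := by
        rw [← div_le_iff₀' hA]
        refine le_realization ⟨0, hGm Nat.one_le_two_pow hG_zero⟩ fun g hg => ?_
        rw [div_le_iff₀' hA, natCast_two_pow_rpow_neg]
        exact rangeLpNorm_weighted_bestApprox_le (S := fun m => G (2 ^ (n + m)))
          (w := fun m => q ^ (n + m)) (p := fun m => P (2 ^ (n + m)) f) hNY_nonneg hNY_add
          (fun m => hGm (Nat.pow_le_pow_right two_pos (Nat.le_succ _))) (fun m => hG_sub _)
          (fun m => hG_conv _) (fun m => by positivity) (fun m => pow_succ' q (n + m))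
          (by positivity) hq1 hc₂.le (fun m => hbern (n + m)) hτ.le (lt_min hcX one_pos)
          (min_le_right _ _) hconv' (fun m => (hP f _ Nat.one_le_two_pow).1)
          (fun m => hbest (n + m)) hg N
    _ ≤ A * (C₀ * KFunctional (Y : Set X) NY f ((2 : ℝ) ^ (-(n : ℝ) * α))) := by
        gcongr
        simpa only [natCast_two_pow_rpow_neg, two_rpow_neg_natCast_mul] using
          hreal f (2 ^ n) Nat.one_le_two_pow
    _ = A * C₀ * KFunctional (Y : Set X) NY f ((2 : ℝ) ^ (-(n : ℝ) * α)) := by ring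

/-- Theorem (A). If `X` is a Banach space which is `τ`-uniformly convex,
each `G_n` is convex, and the Jackson, Bernstein and realization assumptions hold, then
`(∑_{k=n+1}^∞ 2^{-kατ} ‖P_{2^k}(f)‖_Y^τ)^{1/τ} ≲ K(f, 2^{-nα}; X, Y)`. -/
theorem stmt6 {X : Type*} [NormedAddCommGroup X] [NormedSpace ℝ X] [CompleteSpace X]
    (Y : Submodule ℝ X) (NY : X → ℝ)
    (hNY_nonneg : ∀ g : X, 0 ≤ NY g)
    (hNY_add : ∀ g h : X, g ∈ Y → h ∈ Y → NY (g + h) ≤ NY g + NY h)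
    (hNY_smul : ∀ (c : ℝ) (g : X), g ∈ Y → NY (c • g) = |c| * NY g)
    (G : ℕ → Set X)
    (hG_zero : (0 : X) ∈ G 1)
    (hG_mono : ∀ n : ℕ, G n ⊆ G (n + 1))
    (hG_neg : ∀ (n : ℕ) (g : X), g ∈ G n → -g ∈ G n)
    (hG_sub : ∀ n : ℕ, G n ⊆ (Y : Set X))
    (hG_dense : Dense (⋃ n : ℕ, G (n + 1)))
    (α : ℝ) (hα : 0 < α)
    (c₁ c₂ : ℝ) (hc₁ : 0 < c₁) (hc₂ : 0 < c₂)
    (jackson : ∀ f ∈ Y, ∀ n : ℕ, 1 ≤ n →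
      bestApproxError G n f ≤ c₁ * (n : ℝ) ^ (-α) * NY f)
    (bernstein : ∀ n : ℕ, 1 ≤ n → ∀ g₁ ∈ G n, ∀ g₂ ∈ G n,
      NY (g₁ - g₂) ≤ c₂ * (n : ℝ) ^ α * ‖g₁ - g₂‖)
    (C₀ : ℝ) (hC₀ : 0 < C₀)
    (hreal : ∀ (f : X) (n : ℕ), 1 ≤ n →
      realization G NY α n f ≤ C₀ * KFunctional (Y : Set X) NY f ((n : ℝ) ^ (-α)))
    (P : ℕ → X → X)
    (hP : ∀ (f : X) (n : ℕ), 1 ≤ n → P n f ∈ G n ∧ ‖f - P n f‖ = bestApproxError G n f)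
    (hG_conv : ∀ n : ℕ, Convex ℝ (G n))
    (τ : ℝ) (hτ : 1 < τ)
    (cX : ℝ) (hcX : 0 < cX)
    (hconv : ∀ ε : ℝ, 0 ≤ ε → ε ≤ 2 → cX * ε ^ τ ≤ modulusConvexity X ε) :
    ∃ C : ℝ, 0 < C ∧ ∀ (f : X) (n : ℕ), 1 ≤ n →
      (∑' k : ℕ,
          ENNReal.ofReal
            (((2 : ℝ) ^ (-((n + 1 + k : ℕ) : ℝ) * α) * NY (P (2 ^ (n + 1 + k)) f)) ^ τ)) ^
          (1 / τ)
        ≤ ENNReal.ofReal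
            (C * KFunctional (Y : Set X) NY f ((2 : ℝ) ^ (-(n : ℝ) * α))) :=
  stmt6_general Y NY hNY_nonneg hNY_add G hG_zero hG_mono hG_sub α hα c₂ hc₂ bernstein C₀ hC₀ hreal
    P hP hG_conv τ hτ cX hcX hconv
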